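/- arXiv:1708.08576 — 4 statements merged into one kernel-verified Lean document; each statement's English description precedes it below -/
import Mathlib

section
/- Let p_1 ∈ (0,1), p_0 ∈ (0,1), and let p(l,m) = P(A_{l+1} = m) be the transition probabilities of the backwards branching-like process associated to one cookie of strength p_1 and bias parameter p_0. Then: p(0,0) = p_1; p(0,k) = (1 − p_1)(1 − p_0)^{k−1} p_0 for k ≥ 1; p(1,0) = p_1 p_0; p(1,k) = p_1 (1 − p_0)^k p_0 + k (1 − p_1)(1 − p_0)^{k−1} p_0^2 for k ≥ 1; and for j ≥ 2, p(j,0) = p_1 p_0^j and p(j,k) = C(k+j−1, j−1) p_1 (1 − p_0)^k p_0^j + C(k+j−1, j) (1 − p_1)(1 − p_0)^{k−1} p_0^{j+1} for k ≥ 1, where C(·,·) denotes the binomial coefficient. -/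
/-!
`p(l,m)` is the probability of exactly `l` successes among the first `m + l` trials, times the
success probability `p₀` of trial `m + l`.  Condition on the first trial, the only one with
success probability `p₁`: the remaining `m + l - 1` trials are i.i.d. Bernoulli(`p₀`), so they
contain `l - 1` resp. `l` successes with binomial probability, which gives the two terms.
-/

/-- `bbTrans q l m` is the transition probability `p(l,m) = P(A (l+1) = m)` of the
backwards branching-like process: the probability that in a sequence of independent
Bernoulli trials whose `j`-th trial succeeds with probability `q j` (`j` 0-indexed),
there are exactly `m` failures before the `(l+1)`-st success.  Equivalently, among the
first `m + l` trials there are exactly `l` successes and trial `m + l` is a success. -/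
noncomputable def bbTrans (q : ℕ → ℝ) (l m : ℕ) : ℝ :=
  (∑ s ∈ Finset.univ.filter
      (fun s : Fin (m + l) → Bool =>
        (Finset.univ.filter fun j => s j = true).card = l),
    ∏ j : Fin (m + l), (if s j then q (j : ℕ) else 1 - q (j : ℕ)))
    * q (m + l)

open Finset

theorem card_filter_card_filter_eq_true {α : Type*} [Fintype α] [DecidableEq α] (l : ℕ) :
    #{s : α → Bool | #{a | s a = true} = l} = (Fintype.card α).choose l := by
  rw [← card_univ, ← card_powersetCard]
  refine card_nbij' (fun s => ({a | s a = true} : Finset α)) (fun t a => decide (a ∈ t))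
    ?_ ?_ ?_ ?_ <;> intro x hx
  · simpa using hx
  · simp_all
  · funext a; simp
  · ext a; simp

theorem sum_filter_card_eq_prod_ite {R : Type*} [CommSemiring R] {α : Type*} [Fintype α]
    [DecidableEq α] (c d : R) (l : ℕ) :
    ∑ s : α → Bool with #{a | s a = true} = l, ∏ a, (if s a then c else d)
      = (Fintype.card α).choose l * c ^ l * d ^ (Fintype.card α - l) := by
  have weight_eq : ∀ s : α → Bool, #{a | s a = true} = l →
      ∏ a, (if s a then c else d) = c ^ l * d ^ (Fintype.card α - l) := by
    intro s hs
    rw [prod_ite, prod_const, prod_const, ← hs, filter_not,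
      card_sdiff_of_subset (filter_subset _ _), card_univ]
  rw [sum_congr rfl fun s hs => weight_eq s (mem_filter.1 hs).2, sum_const,
    card_filter_card_filter_eq_true, nsmul_eq_mul, mul_assoc]

section PoissonBinomial

variable {R : Type*} [CommRing R]

def poissonBinomial (q : ℕ → R) (n l : ℕ) : R :=
  ∑ s : Fin n → Bool with #{j | s j = true} = l, ∏ j, (if s j then q j else 1 - q j)

theorem bbTrans_eq_poissonBinomial (q : ℕ → ℝ) (l m : ℕ) :
    bbTrans q l m = poissonBinomial q (m + l) l * q (m + l) :=
  rfl

theorem poissonBinomial_const (c : R) (n l : ℕ) :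
    poissonBinomial (fun _ => c) n l = n.choose l * c ^ l * (1 - c) ^ (n - l) := by
  rw [poissonBinomial, sum_filter_card_eq_prod_ite, Fintype.card_fin]

theorem poissonBinomial_succ_eq (q : ℕ → R) (n l : ℕ) :
    poissonBinomial q (n + 1) l
      = q 0 * ∑ s : Fin n → Bool with #{j | s j = true} + 1 = l,
          ∏ j : Fin n, (if s j then q (j + 1) else 1 - q (j + 1))
        + (1 - q 0) * poissonBinomial (fun j => q (j + 1)) n l := by
  rw [poissonBinomial, poissonBinomial, sum_filter, sum_filter, sum_filter, mul_sum, mul_sum,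
    ← (Fin.consEquiv fun _ => Bool).sum_comp, Fintype.sum_prod_type, Fintype.sum_bool]
  congr 1 <;> refine sum_congr rfl fun s _ => ?_ <;>
    simp [Fin.consEquiv_apply, Fin.card_filter_univ_succ, Fin.prod_univ_succ]

theorem poissonBinomial_succ_zero (q : ℕ → R) (n : ℕ) :
    poissonBinomial q (n + 1) 0 = (1 - q 0) * poissonBinomial (fun j => q (j + 1)) n 0 := by
  simp [poissonBinomial_succ_eq]

theorem poissonBinomial_succ_succ (q : ℕ → R) (n l : ℕ) :
    poissonBinomial q (n + 1) (l + 1) = q 0 * poissonBinomial (fun j => q (j + 1)) n l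
      + (1 - q 0) * poissonBinomial (fun j => q (j + 1)) n (l + 1) := by
  simp only [poissonBinomial_succ_eq, Nat.add_right_cancel_iff]
  rfl

end PoissonBinomial

section OneCookie

variable (p₁ p₀ : ℝ)

theorem shift_oneCookie : (fun j : ℕ => if j + 1 = 0 then p₁ else p₀) = fun _ => p₀ := by
  simp

theorem bbTrans_oneCookie_zero_succ (m : ℕ) :
    bbTrans (fun j => if j = 0 then p₁ else p₀) 0 (m + 1) = (1 - p₁) * (1 - p₀) ^ m * p₀ := by
  rw [bbTrans_eq_poissonBinomial, poissonBinomial_succ_zero, shift_oneCookie,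
    poissonBinomial_const]
  simp

theorem bbTrans_oneCookie_succ (l m : ℕ) :
    bbTrans (fun j => if j = 0 then p₁ else p₀) (l + 1) m
      = (m + l).choose l * p₁ * (1 - p₀) ^ m * p₀ ^ (l + 1)
        + (m + l).choose (l + 1) * (1 - p₁) * (1 - p₀) ^ (m - 1) * p₀ ^ (l + 2) := by
  rw [bbTrans_eq_poissonBinomial, ← add_assoc, poissonBinomial_succ_succ, shift_oneCookie,
    poissonBinomial_const, poissonBinomial_const, Nat.add_sub_cancel,
    show m + l - (l + 1) = m - 1 by omega]
  simp only [add_eq_zero, one_ne_zero, and_false, ↓reduceIte]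
  ring

end OneCookie

theorem bb_transition_probabilities_one_cookie_general
    (p₁ p₀ : ℝ) :
    (bbTrans (fun j => if j = 0 then p₁ else p₀) 0 0 = p₁)
    ∧ (∀ k : ℕ, 1 ≤ k →
        bbTrans (fun j => if j = 0 then p₁ else p₀) 0 k
          = (1 - p₁) * (1 - p₀) ^ (k - 1) * p₀)
    ∧ (bbTrans (fun j => if j = 0 then p₁ else p₀) 1 0 = p₁ * p₀)
    ∧ (∀ k : ℕ, 1 ≤ k →
        bbTrans (fun j => if j = 0 then p₁ else p₀) 1 k
          = p₁ * (1 - p₀) ^ k * p₀ + k * (1 - p₁) * (1 - p₀) ^ (k - 1) * p₀ ^ 2)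
    ∧ (∀ j : ℕ, 2 ≤ j →
        bbTrans (fun i => if i = 0 then p₁ else p₀) j 0 = p₁ * p₀ ^ j)
    ∧ (∀ j : ℕ, 2 ≤ j → ∀ k : ℕ, 1 ≤ k →
        bbTrans (fun i => if i = 0 then p₁ else p₀) j k
          = (k + j - 1).choose (j - 1) * p₁ * (1 - p₀) ^ k * p₀ ^ j
            + (k + j - 1).choose j * (1 - p₁) * (1 - p₀) ^ (k - 1) * p₀ ^ (j + 1)) := by
  refine ⟨by simp [bbTrans], ?_, ?_, ?_, ?_, ?_⟩
  · intro k hk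
    obtain ⟨m, rfl⟩ := Nat.exists_eq_add_of_le' hk
    simp [bbTrans_oneCookie_zero_succ]
  · simpa using bbTrans_oneCookie_succ p₁ p₀ 0 0
  · rintro k -
    simpa using bbTrans_oneCookie_succ p₁ p₀ 0 k
  · intro j hj
    obtain ⟨l, rfl⟩ := Nat.exists_eq_add_of_le' (one_le_two.trans hj)
    simpa [pow_succ] using bbTrans_oneCookie_succ p₁ p₀ l 0
  · rintro j hj k -
    obtain ⟨l, rfl⟩ := Nat.exists_eq_add_of_le' (one_le_two.trans hj)
    rw [bbTrans_oneCookie_succ, show k + (l + 1) - 1 = k + l by omega, Nat.add_sub_cancel]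

/-- **Transition probabilities of the backwards branching-like process** associated to
one cookie of strength `p₁` and bias parameter `p₀` (so the trial success probabilities
are `p₁, p₀, p₀, …`). -/
theorem bb_transition_probabilities_one_cookie
    (p₁ p₀ : ℝ) (hp₁ : p₁ ∈ Set.Ioo (0 : ℝ) 1) (hp₀ : p₀ ∈ Set.Ioo (0 : ℝ) 1) :
    (bbTrans (fun j => if j = 0 then p₁ else p₀) 0 0 = p₁)
    ∧ (∀ k : ℕ, 1 ≤ k →
        bbTrans (fun j => if j = 0 then p₁ else p₀) 0 k
          = (1 - p₁) * (1 - p₀) ^ (k - 1) * p₀)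
    ∧ (bbTrans (fun j => if j = 0 then p₁ else p₀) 1 0 = p₁ * p₀)
    ∧ (∀ k : ℕ, 1 ≤ k →
        bbTrans (fun j => if j = 0 then p₁ else p₀) 1 k
          = p₁ * (1 - p₀) ^ k * p₀ + k * (1 - p₁) * (1 - p₀) ^ (k - 1) * p₀ ^ 2)
    ∧ (∀ j : ℕ, 2 ≤ j →
        bbTrans (fun i => if i = 0 then p₁ else p₀) j 0 = p₁ * p₀ ^ j)
    ∧ (∀ j : ℕ, 2 ≤ j → ∀ k : ℕ, 1 ≤ k →
        bbTrans (fun i => if i = 0 then p₁ else p₀) j k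
          = (k + j - 1).choose (j - 1) * p₁ * (1 - p₀) ^ k * p₀ ^ j
            + (k + j - 1).choose j * (1 - p₁) * (1 - p₀) ^ (k - 1) * p₀ ^ (j + 1)) :=
  bb_transition_probabilities_one_cookie_general p₁ p₀
end

section
/- Let p_1 ∈ (0,1) and p_0 ∈ (1/2,1), let π be a stationary distribution of the backwards branching-like process associated to one cookie of strength p_1 and bias parameter p_0, and let G(s) = ∑_{k≥0} π(k) s^k for s ∈ [0,1]. Then for all s ∈ [0,1], G(s) = ((p_1 + s(p_0 − p_1)) / (1 − s(1 − p_0))) · G(p_0 / (1 − s(1 − p_0))). -/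
open MeasureTheory ProbabilityTheory Filter Topology
open scoped ENNReal NNReal

/-- `IsStationaryDist q π` : `π` is a stationary distribution of the backwards
branching-like process with transition probabilities `bbTrans q`: a probability mass
function on `ℕ` with `π m = ∑' l, π l * p(l,m)` for all `m`. -/
def IsStationaryDist (q : ℕ → ℝ) (π : ℕ → ℝ) : Prop :=
  (∀ k, 0 ≤ π k) ∧ (∑' k, π k) = 1 ∧ ∀ m, π m = ∑' l, π l * bbTrans q l m

/-!
Under the one-cookie environment a first-step analysis of the trials gives the row generating
function `∑ₘ p(l,m) sᵐ = p₁ tˡ + (1 - p₁) s tˡ⁺¹` with `t = p₀ / (1 - s (1 - p₀))`, where `tᵏ⁺¹` is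
the generating function of the negative binomial law `p(k,·)` of the homogeneous environment.
Since `p₁ + (1 - p₁) s t = (p₁ + s (p₀ - p₁)) / (1 - s (1 - p₀))`, multiplying the stationarity
equation by `sᵐ`, summing over `m` and exchanging the order of summation (all terms are
nonnegative) yields the formula.
-/

open Finset

section FirstStep

variable (q : ℕ → ℝ)

noncomputable def exactSuccessesProb (n l : ℕ) : ℝ :=
  ∑ s ∈ univ.filter (fun s : Fin n → Bool => (univ.filter fun j => s j = true).card = l),
    ∏ j : Fin n, if s j then q j else 1 - q j

lemma bbTrans_eq_exactSuccessesProb (l m : ℕ) :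
    bbTrans q l m = exactSuccessesProb q (m + l) l * q (m + l) :=
  rfl

lemma card_filter_card_filter_eq_choose (n l : ℕ) :
    (univ.filter fun s : Fin n → Bool => (univ.filter fun j => s j = true).card = l).card
      = n.choose l := by
  rw [show n.choose l = (powersetCard l (univ : Finset (Fin n))).card by simp]
  refine card_bij' (fun s _ => univ.filter fun j => s j = true) (fun T _ j => decide (j ∈ T))
    ?_ ?_ (fun s _ => by ext; simp) (fun T _ => by ext; simp)
  · intro s hs
    simpa [mem_powersetCard] using hs
  · intro T hT
    simpa using (mem_powersetCard.1 hT).2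

lemma exactSuccessesProb_const (c : ℝ) (n l : ℕ) :
    exactSuccessesProb (fun _ => c) n l = n.choose l * c ^ l * (1 - c) ^ (n - l) := by
  have hterm : ∀ s : Fin n → Bool, (univ.filter fun j => s j = true).card = l →
      ∏ j, (if s j then c else 1 - c) = c ^ l * (1 - c) ^ (n - l) := by
    intro s hs
    have hfalse : (univ.filter fun j => ¬ s j = true).card = n - l := by
      rw [filter_not, card_sdiff_of_subset (filter_subset _ _), hs, card_univ, Fintype.card_fin]
    rw [prod_ite, prod_const, prod_const, hs, hfalse]
  rw [exactSuccessesProb, sum_congr rfl fun s hs => hterm s (mem_filter.1 hs).2, sum_const,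
    card_filter_card_filter_eq_choose, nsmul_eq_mul, mul_assoc]

lemma card_filter_cons_eq_true {n : ℕ} (b : Bool) (s : Fin n → Bool) :
    (univ.filter fun j => (Fin.cons b s : Fin (n + 1) → Bool) j = true).card
      = (if b then 1 else 0) + (univ.filter fun j => s j = true).card := by
  rw [card_filter, card_filter, Fin.sum_univ_succ]
  simp

lemma exactSuccessesProb_succ (n l : ℕ) :
    exactSuccessesProb q (n + 1) l
      = q 0 * ∑ s ∈ univ.filter (fun s : Fin n → Bool =>
            (univ.filter fun j => s j = true).card + 1 = l),
          ∏ j : Fin n, (if s j then q (j + 1) else 1 - q (j + 1))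
        + (1 - q 0) * exactSuccessesProb (fun j => q (j + 1)) n l := by
  rw [exactSuccessesProb, exactSuccessesProb, sum_filter, sum_filter, sum_filter, mul_sum, mul_sum,
    ← (Fin.consEquiv fun _ => Bool).sum_comp, Fintype.sum_prod_type, Fintype.sum_bool]
  have hcons : ∀ b (s : Fin n → Bool), (Fin.consEquiv fun _ => Bool) (b, s) = Fin.cons b s :=
    fun _ _ => rfl
  congr 1 <;> refine sum_congr rfl fun s _ => ?_ <;>
    simp only [hcons, card_filter_cons_eq_true, Fin.prod_univ_succ, Fin.cons_zero,
      Fin.cons_succ] <;>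
    simp [add_comm, mul_ite]

lemma exactSuccessesProb_succ_zero (n : ℕ) :
    exactSuccessesProb q (n + 1) 0 = (1 - q 0) * exactSuccessesProb (fun j => q (j + 1)) n 0 := by
  simp [exactSuccessesProb_succ]

lemma exactSuccessesProb_succ_succ (n l : ℕ) :
    exactSuccessesProb q (n + 1) (l + 1)
      = q 0 * exactSuccessesProb (fun j => q (j + 1)) n l
        + (1 - q 0) * exactSuccessesProb (fun j => q (j + 1)) n (l + 1) := by
  rw [exactSuccessesProb_succ]
  congr 3
  exact filter_congr fun s _ => add_left_inj 1

lemma exactSuccessesProb_eq_zero_of_lt {n l : ℕ} (h : n < l) : exactSuccessesProb q n l = 0 := by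
  refine sum_eq_zero fun s hs => absurd (mem_filter.1 hs).2 (ne_of_lt ?_)
  exact (card_filter_le _ _).trans_lt (by simpa using h)

lemma bbTrans_nonneg (hq : ∀ j, q j ∈ Set.Icc 0 1) (l m : ℕ) : 0 ≤ bbTrans q l m := by
  refine mul_nonneg (sum_nonneg fun s _ => prod_nonneg fun j _ => ?_) (hq _).1
  split_ifs
  exacts [(hq j).1, sub_nonneg.2 (hq j).2]

lemma bbTrans_const (c : ℝ) (l m : ℕ) :
    bbTrans (fun _ => c) l m = (m + l).choose l * c ^ (l + 1) * (1 - c) ^ m := by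
  rw [bbTrans_eq_exactSuccessesProb, exactSuccessesProb_const, Nat.add_sub_cancel]
  ring

lemma bbTrans_zero_zero : bbTrans q 0 0 = q 0 := by
  simp [bbTrans]

lemma bbTrans_zero_succ (m : ℕ) :
    bbTrans q 0 (m + 1) = (1 - q 0) * bbTrans (fun j => q (j + 1)) 0 m := by
  simp only [bbTrans_eq_exactSuccessesProb, add_zero]
  rw [exactSuccessesProb_succ_zero]
  ring

lemma bbTrans_succ_zero (l : ℕ) :
    bbTrans q (l + 1) 0 = q 0 * bbTrans (fun j => q (j + 1)) l 0 := by
  simp only [bbTrans_eq_exactSuccessesProb, zero_add]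
  rw [exactSuccessesProb_succ_succ, exactSuccessesProb_eq_zero_of_lt _ l.lt_succ_self]
  ring

lemma bbTrans_succ_succ (l m : ℕ) :
    bbTrans q (l + 1) (m + 1)
      = q 0 * bbTrans (fun j => q (j + 1)) l (m + 1)
        + (1 - q 0) * bbTrans (fun j => q (j + 1)) (l + 1) m := by
  simp only [bbTrans_eq_exactSuccessesProb]
  rw [show m + 1 + (l + 1) = m + 1 + l + 1 by ring,
    exactSuccessesProb_succ_succ, show m + (l + 1) = m + 1 + l by ring]
  ring

end FirstStep

section GeneratingFunction

variable {q : ℕ → ℝ} {s : ℝ}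

lemma hasSum_bbTrans_zero_mul_pow {b : ℝ}
    (hb : HasSum (fun m => bbTrans (fun j => q (j + 1)) 0 m * s ^ m) b) :
    HasSum (fun m => bbTrans q 0 m * s ^ m) (q 0 + (1 - q 0) * s * b) := by
  have htail : HasSum (fun m => bbTrans q 0 (m + 1) * s ^ (m + 1)) ((1 - q 0) * s * b) := by
    have hterm : ∀ m, bbTrans q 0 (m + 1) * s ^ (m + 1)
        = (1 - q 0) * s * (bbTrans (fun j => q (j + 1)) 0 m * s ^ m) := fun m => by
      rw [bbTrans_zero_succ]
      ring
    simpa only [← hterm] using hb.mul_left ((1 - q 0) * s)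
  simpa [bbTrans_zero_zero] using htail.zero_add (f := fun m => bbTrans q 0 m * s ^ m)

lemma hasSum_bbTrans_succ_mul_pow {l : ℕ} {a b : ℝ}
    (ha : HasSum (fun m => bbTrans (fun j => q (j + 1)) l m * s ^ m) a)
    (hb : HasSum (fun m => bbTrans (fun j => q (j + 1)) (l + 1) m * s ^ m) b) :
    HasSum (fun m => bbTrans q (l + 1) m * s ^ m) (q 0 * a + (1 - q 0) * s * b) := by
  have ha' : HasSum (fun m => bbTrans (fun j => q (j + 1)) l (m + 1) * s ^ (m + 1))
      (a - bbTrans (fun j => q (j + 1)) l 0) := by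
    simpa using (hasSum_nat_add_iff' 1).2 ha
  have hterm : ∀ m, bbTrans q (l + 1) (m + 1) * s ^ (m + 1)
      = q 0 * (bbTrans (fun j => q (j + 1)) l (m + 1) * s ^ (m + 1))
        + (1 - q 0) * s * (bbTrans (fun j => q (j + 1)) (l + 1) m * s ^ m) := fun m => by
    rw [bbTrans_succ_succ]
    ring
  have htail := (ha'.mul_left (q 0)).add (hb.mul_left ((1 - q 0) * s))
  simp only [← hterm] at htail
  have hvalue : bbTrans q (l + 1) 0 * s ^ 0
      + (q 0 * (a - bbTrans (fun j => q (j + 1)) l 0) + (1 - q 0) * s * b)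
      = q 0 * a + (1 - q 0) * s * b := by
    rw [bbTrans_succ_zero]
    ring
  simpa only [hvalue] using htail.zero_add (f := fun m => bbTrans q (l + 1) m * s ^ m)

lemma hasSum_bbTrans_const_mul_pow {c : ℝ} (hs : ‖s * (1 - c)‖ < 1) (l : ℕ) :
    HasSum (fun m => bbTrans (fun _ => c) l m * s ^ m) ((c / (1 - s * (1 - c))) ^ (l + 1)) := by
  have hterm : ∀ m, bbTrans (fun _ => c) l m * s ^ m
      = c ^ (l + 1) * ((m + l).choose l * (s * (1 - c)) ^ m) := fun m => by
    rw [bbTrans_const, mul_pow]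
    ring
  rw [funext hterm, div_pow, div_eq_mul_one_div]
  exact (hasSum_choose_mul_geometric_of_norm_lt_one l hs).mul_left (c ^ (l + 1))

end GeneratingFunction

lemma hasSum_bbTrans_cookie_mul_pow {p₁ p₀ s : ℝ} (hs : ‖s * (1 - p₀)‖ < 1) (l : ℕ) :
    HasSum (fun m => bbTrans (fun j => if j = 0 then p₁ else p₀) l m * s ^ m)
      ((p₁ + s * (p₀ - p₁)) / (1 - s * (1 - p₀)) * (p₀ / (1 - s * (1 - p₀))) ^ l) := by
  have hfactor : (p₁ + s * (p₀ - p₁)) / (1 - s * (1 - p₀))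
      = p₁ + (1 - p₁) * s * (p₀ / (1 - s * (1 - p₀))) := by
    have hD : 1 - s * (1 - p₀) ≠ 0 := by
      rw [sub_ne_zero]
      rintro h
      simp [← h] at hs
    field_simp
    ring
  have hshift : ∀ k, HasSum
      (fun m => bbTrans (fun j => if j + 1 = 0 then p₁ else p₀) k m * s ^ m)
      ((p₀ / (1 - s * (1 - p₀))) ^ (k + 1)) := by
    simpa using hasSum_bbTrans_const_mul_pow hs
  set q : ℕ → ℝ := fun j => if j = 0 then p₁ else p₀
  rw [hfactor]
  cases l with
  | zero =>
    convert hasSum_bbTrans_zero_mul_pow (q := q) (hshift 0) using 1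
    simp [q]
  | succ l =>
    convert hasSum_bbTrans_succ_mul_pow (q := q) (hshift l) (hshift (l + 1)) using 1
    simp only [q, ↓reduceIte]
    ring

lemma tsum_mul_eq_tsum_mul_of_stationary {ι : Type*} {P : ι → ι → ℝ} {π w g : ι → ℝ}
    (hP : ∀ l m, 0 ≤ P l m) (hπ : ∀ l, 0 ≤ π l) (hw : ∀ m, 0 ≤ w m)
    (hstat : ∀ m, π m = ∑' l, π l * P l m) (hrow : ∀ l, HasSum (fun m => P l m * w m) (g l))
    (hg : Summable fun l => π l * g l) :
    ∑' m, π m * w m = ∑' l, π l * g l := by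
  have hrow' : ∀ l, HasSum (fun m => π l * P l m * w m) (π l * g l) := fun l => by
    simpa only [mul_assoc] using (hrow l).mul_left (π l)
  have hsummable : Summable (Function.uncurry fun l m => π l * P l m * w m) :=
    (summable_prod_of_nonneg fun x => mul_nonneg (mul_nonneg (hπ _) (hP _ _)) (hw _)).2
      ⟨fun l => (hrow' l).summable, by simpa only [fun l => (hrow' l).tsum_eq] using hg⟩
  calc ∑' m, π m * w m = ∑' m, ∑' l, π l * P l m * w m :=
        tsum_congr fun m => by rw [hstat m, tsum_mul_right]
    _ = ∑' l, ∑' m, π l * P l m * w m := hsummable.tsum_comm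
    _ = ∑' l, π l * g l := tsum_congr fun l => (hrow' l).tsum_eq

/-- **Recursive formula for the probability generating function.**
Let `π` be a stationary distribution of the backwards branching-like process associated
to one cookie of strength `p₁` and bias parameter `p₀ ∈ (1/2,1)`, and let
`G s = ∑' k, π k * s ^ k`.  Then for all `s ∈ [0,1]`,
`G s = (p₁ + s (p₀ - p₁)) / (1 - s (1 - p₀)) * G (p₀ / (1 - s (1 - p₀)))`. -/
theorem pgf_recursive_formula
    (p₁ p₀ : ℝ) (hp₁ : p₁ ∈ Set.Ioo (0 : ℝ) 1) (hp₀ : p₀ ∈ Set.Ioo (1 / 2 : ℝ) 1)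
    (π : ℕ → ℝ) (hπ : IsStationaryDist (fun j => if j = 0 then p₁ else p₀) π) :
    ∀ s ∈ Set.Icc (0 : ℝ) 1,
      (∑' k : ℕ, π k * s ^ k)
        = (p₁ + s * (p₀ - p₁)) / (1 - s * (1 - p₀))
            * ∑' k : ℕ, π k * (p₀ / (1 - s * (1 - p₀))) ^ k := by
  rintro s ⟨hs₀, hs₁⟩
  obtain ⟨hπ_nonneg, hπ_sum, hπ_stat⟩ := hπ
  obtain ⟨hp₀_gt, hp₀_lt⟩ := hp₀
  set t := p₀ / (1 - s * (1 - p₀))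
  have hx : ‖s * (1 - p₀)‖ < 1 := by
    rw [Real.norm_of_nonneg (mul_nonneg hs₀ (by linarith))]
    nlinarith
  have ht₀ : 0 ≤ t := div_nonneg (by linarith) (by nlinarith)
  have ht₁ : t ≤ 1 := (div_le_one (by nlinarith)).2 (by nlinarith)
  have hq : ∀ j, (if j = 0 then p₁ else p₀) ∈ Set.Icc 0 1 := fun j => by
    split_ifs <;> constructor <;> linarith [hp₁.1, hp₁.2]
  have hπ_summable : Summable π := by
    by_contra h
    simp [tsum_eq_zero_of_not_summable h] at hπ_sum
  have hπt_summable : Summable fun k => π k * t ^ k :=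
    hπ_summable.of_nonneg_of_le (fun k => mul_nonneg (hπ_nonneg k) (pow_nonneg ht₀ k))
      (fun k => mul_le_of_le_one_right (hπ_nonneg k) (pow_le_one₀ ht₀ ht₁))
  set C := (p₁ + s * (p₀ - p₁)) / (1 - s * (1 - p₀))
  calc ∑' k, π k * s ^ k = ∑' k, π k * (C * t ^ k) :=
        tsum_mul_eq_tsum_mul_of_stationary (bbTrans_nonneg _ hq) hπ_nonneg
          (fun m => pow_nonneg hs₀ m) hπ_stat (hasSum_bbTrans_cookie_mul_pow hx)
          ((hπt_summable.mul_left C).congr fun k => mul_left_comm _ _ _)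
    _ = C * ∑' k, π k * t ^ k := by
      rw [← tsum_mul_left]
      exact tsum_congr fun k => mul_left_comm _ _ _
end

section
/- Let q ∈ (1/2, 1), M ≥ 1, and let p ∈ (0,1)^M satisfy p_i ≤ q for all 1 ≤ i ≤ M. Let (Y_n)_{n≥0} be the standard excited random walk with M cookies and cookie strength vector p. Then almost surely limsup_{n→∞} Y_n / n ≤ 2q − 1. -/
open MeasureTheory ProbabilityTheory Filter Topology
open scoped ENNReal NNReal

/-- The success probability of the `j+1`-st visit to a site: `p (j+1)` while cookies
remain (`j < M`), and the bias parameter `p₀` afterwards. -/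
noncomputable def cookieSeq (M : ℕ) (p : Fin M → ℝ) (p₀ : ℝ) (j : ℕ) : ℝ :=
  if h : j < M then p ⟨j, h⟩ else p₀

/-- `IsEARW P M p p₀ X` : under the probability measure `P`, the process `X` is an
excited asymmetric random walk with `M` cookies of strengths `p ∈ (0,1)^M` and bias
parameter `p₀`: it starts at `0`, moves by `±1` steps, and conditionally on the path
`(X 0, …, X n)` it steps right with probability `p i` on the event
`#{m ≤ n : X m = X n} = i` for `1 ≤ i ≤ M`, and with probability `p₀` on the event
`#{m ≤ n : X m = X n} > M`. -/
structure IsEARW {Ω : Type*} [MeasurableSpace Ω] (P : Measure Ω)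
    (M : ℕ) (p : Fin M → ℝ) (p₀ : ℝ) (X : ℕ → Ω → ℤ) : Prop where
  measurable : ∀ n, Measurable (X n)
  init : ∀ ω, X 0 ω = 0
  steps : ∀ ω n, |X (n + 1) ω - X n ω| = 1
  cond : ∀ (n : ℕ) (w : Fin (n + 1) → ℤ),
    P ({ω | X (n + 1) ω = w (Fin.last n) + 1} ∩ {ω | ∀ m : Fin (n + 1), X m ω = w m})
      = ENNReal.ofReal
          (cookieSeq M p p₀
            ((Finset.univ.filter fun m : Fin (n + 1) => w m = w (Fin.last n)).card - 1))
        * P {ω | ∀ m : Fin (n + 1), X m ω = w m}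


/-! Given its past, the walk steps up with probability at most `q` (cookie steps by `p i ≤ q`,
the others with probability `1/2 ≤ q`). Hence
`E exp (l Y (n+1)) ≤ (q eˡ + (1-q) e⁻ˡ) E exp (l Y n)`, and the Chernoff bound with `l = ε/2`
makes `P (Y n ≥ (2q-1+ε) n)` decay geometrically in `n`.
Borel–Cantelli gives `limsup Y n / n ≤ 2q-1+ε` almost surely, for every `ε > 0`. -/

open Real

lemma mul_exp_add_mul_exp_neg_le {q l : ℝ} (hq₀ : 0 ≤ q) (hq₁ : q ≤ 1) (hl : |l| ≤ 1) :
    q * exp l + (1 - q) * exp (-l) ≤ exp ((2 * q - 1) * l + l ^ 2) := by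
  have hexp_le (x : ℝ) (hx : |x| ≤ 1) : exp x ≤ 1 + x + x ^ 2 := by
    linarith [(abs_le.mp (abs_exp_sub_one_sub_id_le hx)).2]
  have hpos := hexp_le l hl
  have hneg := hexp_le (-l) (by rwa [abs_neg])
  calc q * exp l + (1 - q) * exp (-l)
      ≤ q * (1 + l + l ^ 2) + (1 - q) * (1 + -l + (-l) ^ 2) := by gcongr
    _ = (2 * q - 1) * l + l ^ 2 + 1 := by ring
    _ ≤ exp ((2 * q - 1) * l + l ^ 2) := add_one_le_exp _

lemma abs_le_of_abs_sub_le_one {f : ℕ → ℤ} (h₀ : f 0 = 0)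
    (hstep : ∀ n, |f (n + 1) - f n| ≤ 1) (n : ℕ) : |f n| ≤ n := by
  induction n with
  | zero => simp [h₀]
  | succ n ih =>
    have := abs_sub_abs_le_abs_sub (f (n + 1)) (f n)
    push_cast
    linarith [hstep n]

lemma ae_le_of_forall_ae_le_add {α : Type*} [MeasurableSpace α] {μ : Measure α} {f : α → ℝ}
    {c : ℝ} (h : ∀ ε, 0 < ε → ε ≤ 1 → ∀ᵐ x ∂μ, f x ≤ c + ε) : ∀ᵐ x ∂μ, f x ≤ c := by
  have hk : ∀ k : ℕ, ∀ᵐ x ∂μ, f x ≤ c + 1 / ((k : ℝ) + 1) := fun k =>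
    h _ Nat.one_div_pos_of_nat (div_le_one_of_le₀ (by linarith [k.cast_nonneg (α := ℝ)])
      (by positivity))
  filter_upwards [ae_all_iff.mpr hk] with x hx
  have hlim : Tendsto (fun k : ℕ => c + 1 / ((k : ℝ) + 1)) atTop (𝓝 c) := by
    simpa using tendsto_const_nhds.add (tendsto_one_div_add_atTop_nhds_zero_nat (𝕜 := ℝ))
  exact ge_of_tendsto' hlim hx

section Walk

variable {Ω : Type*} [MeasurableSpace Ω]

def pathCylinder (X : ℕ → Ω → ℤ) (n : ℕ) (w : Fin (n + 1) → ℤ) : Set Ω :=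
  {ω | ∀ m : Fin (n + 1), X m ω = w m}

/-- A `±1` walk from `0` whose conditional probability of an up-step given its path
`(X 0, …, X n)` is at most `q`. -/
structure IsWalkUpProbLE (P : Measure Ω) (X : ℕ → Ω → ℤ) (q : ℝ) : Prop where
  measurable : ∀ n, Measurable (X n)
  init : ∀ ω, X 0 ω = 0
  steps : ∀ ω n, |X (n + 1) ω - X n ω| = 1
  up_le : ∀ (n : ℕ) (w : Fin (n + 1) → ℤ),
    P ({ω | X (n + 1) ω = w (Fin.last n) + 1} ∩ pathCylinder X n w)
      ≤ ENNReal.ofReal q * P (pathCylinder X n w)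

lemma cookieSeq_le {M : ℕ} {p : Fin M → ℝ} {p₀ q : ℝ} (hp₀ : p₀ ≤ q) (hpq : ∀ i, p i ≤ q)
    (j : ℕ) : cookieSeq M p p₀ j ≤ q := by
  unfold cookieSeq
  split
  · exact hpq _
  · exact hp₀

lemma IsEARW.isWalkUpProbLE {P : Measure Ω} {M : ℕ} {p : Fin M → ℝ} {p₀ q : ℝ}
    {X : ℕ → Ω → ℤ} (hX : IsEARW P M p p₀ X) (hp₀ : p₀ ≤ q) (hpq : ∀ i, p i ≤ q) :
    IsWalkUpProbLE P X q where
  measurable := hX.measurable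
  init := hX.init
  steps := hX.steps
  up_le n w := by
    unfold pathCylinder
    rw [hX.cond n w]
    gcongr
    exact cookieSeq_le hp₀ hpq _

variable {X : ℕ → Ω → ℤ} {n : ℕ}

lemma measurableSet_pathCylinder (hX : ∀ n, Measurable (X n)) (w : Fin (n + 1) → ℤ) :
    MeasurableSet (pathCylinder X n w) := by
  have : pathCylinder X n w = ⋂ m : Fin (n + 1), X m ⁻¹' {w m} := by
    ext ω
    simp [pathCylinder]
  rw [this]
  exact .iInter fun m => hX m (measurableSet_singleton _)

lemma lintegral_eq_tsum_setLIntegral_pathCylinder (hX : ∀ n, Measurable (X n))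
    (μ : Measure Ω) (f : Ω → ℝ≥0∞) :
    ∫⁻ ω, f ω ∂μ = ∑' w : Fin (n + 1) → ℤ, ∫⁻ ω in pathCylinder X n w, f ω ∂μ := by
  have hdisj : Pairwise (Function.onFun Disjoint (pathCylinder X n)) := fun w w' hne =>
    Set.disjoint_left.mpr fun ω hw hw' => hne (funext fun m => (hw m).symm.trans (hw' m))
  have hcover : ⋃ w, pathCylinder X n w = Set.univ :=
    Set.eq_univ_of_forall fun ω => Set.mem_iUnion.mpr ⟨fun m => X m ω, fun _ => rfl⟩
  rw [← setLIntegral_univ, ← hcover, lintegral_iUnion (measurableSet_pathCylinder hX) hdisj]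

lemma setLIntegral_pathCylinder (hX : ∀ n, Measurable (X n)) (μ : Measure Ω) (g : ℤ → ℝ≥0∞)
    (w : Fin (n + 1) → ℤ) :
    ∫⁻ ω in pathCylinder X n w, g (X n ω) ∂μ = g (w (Fin.last n)) * μ (pathCylinder X n w) := by
  rw [← setLIntegral_const]
  refine setLIntegral_congr_fun (measurableSet_pathCylinder hX w) fun ω hω => ?_
  simpa using congrArg g (hω (Fin.last n))

namespace IsWalkUpProbLE

variable {P : Measure Ω} {q : ℝ}

lemma abs_le (h : IsWalkUpProbLE P X q) (ω : Ω) (n : ℕ) : |X n ω| ≤ n :=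
  abs_le_of_abs_sub_le_one (f := fun k => X k ω) (h.init ω) (fun n => (h.steps ω n).le) n

lemma measurableSet_up (h : IsWalkUpProbLE P X q) (n : ℕ) :
    MeasurableSet {ω | X (n + 1) ω = X n ω + 1} :=
  measurableSet_eq_fun (h.measurable _) ((h.measurable n).add_const 1)

lemma setLIntegral_up_le (h : IsWalkUpProbLE P X q) (g : ℤ → ℝ≥0∞) (n : ℕ) :
    ∫⁻ ω in {ω | X (n + 1) ω = X n ω + 1}, g (X n ω) ∂P
      ≤ ENNReal.ofReal q * ∫⁻ ω, g (X n ω) ∂P := by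
  rw [lintegral_eq_tsum_setLIntegral_pathCylinder h.measurable,
    lintegral_eq_tsum_setLIntegral_pathCylinder h.measurable, ← ENNReal.tsum_mul_left]
  refine ENNReal.tsum_le_tsum fun w => ?_
  have hup : pathCylinder X n w ∩ {ω | X (n + 1) ω = X n ω + 1}
      = {ω | X (n + 1) ω = w (Fin.last n) + 1} ∩ pathCylinder X n w := by
    ext ω
    refine ⟨fun ⟨hw, hω⟩ => ⟨?_, hw⟩, fun ⟨hω, hw⟩ => ⟨hw, ?_⟩⟩ <;>
      simpa [← hw (Fin.last n)] using hω
  rw [setLIntegral_pathCylinder h.measurable, setLIntegral_pathCylinder h.measurable,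
    Measure.restrict_apply (measurableSet_pathCylinder h.measurable w), hup, mul_left_comm]
  exact mul_le_mul_right (h.up_le n w) _

lemma measurable_ofReal_exp_mul (h : IsWalkUpProbLE P X q) (l : ℝ) (n : ℕ) :
    Measurable fun ω => ENNReal.ofReal (exp (l * X n ω)) :=
  ((measurable_from_top.comp (h.measurable n)).const_mul l).exp.ennreal_ofReal

/-- An up-step multiplies `exp (l * X)` by `exp l`, a down-step by `exp (-l)`. -/
lemma ofReal_exp_mul_succ (h : IsWalkUpProbLE P X q) {l : ℝ} (hl : 0 ≤ l) (n : ℕ) (ω : Ω) :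
    ENNReal.ofReal (exp (l * X (n + 1) ω))
      = ENNReal.ofReal (exp (-l)) * ENNReal.ofReal (exp (l * X n ω))
        + ENNReal.ofReal (exp l - exp (-l)) * {ω | X (n + 1) ω = X n ω + 1}.indicator
            (fun ω => ENNReal.ofReal (exp (l * X n ω))) ω := by
  have hgap : 0 ≤ exp l - exp (-l) := sub_nonneg.mpr (exp_le_exp.mpr (by linarith))
  rcases (abs_eq zero_le_one).mp (h.steps ω n) with hω | hω
  · rw [Set.indicator_of_mem (by simp only [Set.mem_ofPred_eq]; omega),
      ← ENNReal.ofReal_mul (exp_pos _).le, ← ENNReal.ofReal_mul hgap,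
      ← ENNReal.ofReal_add (by positivity) (by positivity),
      show X (n + 1) ω = X n ω + 1 by omega]
    push_cast
    rw [mul_add, mul_one, exp_add]
    ring_nf
  · rw [Set.indicator_of_notMem (by simp only [Set.mem_ofPred_eq]; omega), mul_zero, add_zero,
      ← ENNReal.ofReal_mul (exp_pos _).le, show X (n + 1) ω = X n ω - 1 by omega]
    push_cast
    rw [mul_sub, mul_one, sub_eq_add_neg, exp_add, mul_comm]

lemma lintegral_exp_succ_le (h : IsWalkUpProbLE P X q) (hq : 0 ≤ q) {l : ℝ} (hl : 0 ≤ l)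
    (n : ℕ) :
    ∫⁻ ω, ENNReal.ofReal (exp (l * X (n + 1) ω)) ∂P
      ≤ ENNReal.ofReal (q * exp l + (1 - q) * exp (-l)) *
        ∫⁻ ω, ENNReal.ofReal (exp (l * X n ω)) ∂P := by
  set G : Ω → ℝ≥0∞ := fun ω => ENNReal.ofReal (exp (l * X n ω))
  have hG : Measurable G := h.measurable_ofReal_exp_mul l n
  have hgap : 0 ≤ exp l - exp (-l) := sub_nonneg.mpr (exp_le_exp.mpr (by linarith))
  calc ∫⁻ ω, ENNReal.ofReal (exp (l * X (n + 1) ω)) ∂P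
      = ENNReal.ofReal (exp (-l)) * ∫⁻ ω, G ω ∂P
          + ENNReal.ofReal (exp l - exp (-l)) *
            ∫⁻ ω in {ω | X (n + 1) ω = X n ω + 1}, G ω ∂P := by
        simp_rw [h.ofReal_exp_mul_succ hl n]
        rw [lintegral_add_left (hG.const_mul _), lintegral_const_mul _ hG,
          lintegral_const_mul' _ _ ENNReal.ofReal_ne_top,
          lintegral_indicator (h.measurableSet_up n)]
    _ ≤ ENNReal.ofReal (exp (-l)) * ∫⁻ ω, G ω ∂P
          + ENNReal.ofReal (exp l - exp (-l)) * (ENNReal.ofReal q * ∫⁻ ω, G ω ∂P) := by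
        gcongr
        exact h.setLIntegral_up_le (fun z => ENNReal.ofReal (exp (l * z))) n
    _ = ENNReal.ofReal (q * exp l + (1 - q) * exp (-l)) * ∫⁻ ω, G ω ∂P := by
        rw [← mul_assoc, ← add_mul, ← ENNReal.ofReal_mul hgap,
          ← ENNReal.ofReal_add (exp_pos _).le (mul_nonneg hgap hq)]
        ring_nf

lemma lintegral_exp_le_pow (h : IsWalkUpProbLE P X q) [IsProbabilityMeasure P] (hq : 0 ≤ q)
    {l : ℝ} (hl : 0 ≤ l) (n : ℕ) :
    ∫⁻ ω, ENNReal.ofReal (exp (l * X n ω)) ∂P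
      ≤ ENNReal.ofReal (q * exp l + (1 - q) * exp (-l)) ^ n := by
  induction n with
  | zero => simp [h.init]
  | succ n ih =>
    calc ∫⁻ ω, ENNReal.ofReal (exp (l * X (n + 1) ω)) ∂P
        ≤ ENNReal.ofReal (q * exp l + (1 - q) * exp (-l)) *
            ∫⁻ ω, ENNReal.ofReal (exp (l * X n ω)) ∂P := h.lintegral_exp_succ_le hq hl n
      _ ≤ ENNReal.ofReal (q * exp l + (1 - q) * exp (-l)) *
            ENNReal.ofReal (q * exp l + (1 - q) * exp (-l)) ^ n := by gcongr
      _ = ENNReal.ofReal (q * exp l + (1 - q) * exp (-l)) ^ (n + 1) := (pow_succ' _ _).symm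

lemma measure_ge_le_pow (h : IsWalkUpProbLE P X q) [IsProbabilityMeasure P] (hq : 0 ≤ q)
    {l : ℝ} (hl : 0 ≤ l) (t : ℝ) (n : ℕ) :
    P {ω | t * n ≤ X n ω}
      ≤ ENNReal.ofReal (exp (-(l * t)) * (q * exp l + (1 - q) * exp (-l))) ^ n := by
  set E := ENNReal.ofReal (exp (l * (t * n)))
  set G : Ω → ℝ≥0∞ := fun ω => ENNReal.ofReal (exp (l * X n ω))
  have hG : Measurable G := h.measurable_ofReal_exp_mul l n
  have hsub : {ω | t * n ≤ X n ω} ⊆ {ω | E ≤ G ω} := fun ω hω =>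
    ENNReal.ofReal_le_ofReal (exp_le_exp.mpr (mul_le_mul_of_nonneg_left hω hl))
  have hE : ENNReal.ofReal (exp (-(l * (t * n)))) * E = 1 := by
    rw [← ENNReal.ofReal_mul (exp_pos _).le, ← exp_add, neg_add_cancel, exp_zero,
      ENNReal.ofReal_one]
  calc P {ω | t * n ≤ X n ω}
      = ENNReal.ofReal (exp (-(l * (t * n)))) * (E * P {ω | t * n ≤ X n ω}) := by
        rw [← mul_assoc, hE, one_mul]
    _ ≤ ENNReal.ofReal (exp (-(l * (t * n)))) * ∫⁻ ω, G ω ∂P := by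
        gcongr
        exact (mul_le_mul_right (measure_mono hsub) E).trans
          (mul_meas_ge_le_lintegral₀ hG.aemeasurable E)
    _ ≤ ENNReal.ofReal (exp (-(l * t))) ^ n *
          ENNReal.ofReal (q * exp l + (1 - q) * exp (-l)) ^ n := by
        rw [← ENNReal.ofReal_pow (exp_pos _).le, ← exp_nat_mul]
        gcongr
        · exact le_of_eq (by ring_nf)
        · exact h.lintegral_exp_le_pow hq hl n
    _ = _ := by rw [← mul_pow, ← ENNReal.ofReal_mul (exp_pos _).le]

lemma ae_eventually_lt (h : IsWalkUpProbLE P X q) [IsProbabilityMeasure P] (hq₀ : 0 ≤ q)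
    (hq₁ : q ≤ 1) {ε : ℝ} (hε : 0 < ε) (hε₁ : ε ≤ 1) :
    ∀ᵐ ω ∂P, ∀ᶠ n in atTop, (X n ω : ℝ) < (2 * q - 1 + ε) * n := by
  -- the Chernoff exponent at `l = ε / 2` is `-ε ^ 2 / 4`
  have hρ : exp (-(ε / 2 * (2 * q - 1 + ε))) * (q * exp (ε / 2) + (1 - q) * exp (-(ε / 2)))
      < 1 := by
    calc exp (-(ε / 2 * (2 * q - 1 + ε))) * (q * exp (ε / 2) + (1 - q) * exp (-(ε / 2)))
        ≤ exp (-(ε / 2 * (2 * q - 1 + ε))) * exp ((2 * q - 1) * (ε / 2) + (ε / 2) ^ 2) :=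
          mul_le_mul_of_nonneg_left (mul_exp_add_mul_exp_neg_le hq₀ hq₁
            (by rw [abs_of_pos (by positivity)]; linarith)) (exp_pos _).le
      _ = exp (-(ε ^ 2 / 4)) := by rw [← exp_add]; ring_nf
      _ < 1 := exp_lt_one_iff.mpr (by nlinarith)
  have hsum : ∑' n, P {ω | (2 * q - 1 + ε) * n ≤ X n ω} ≠ ⊤ := by
    refine ne_top_of_le_ne_top ?_
      (ENNReal.tsum_le_tsum fun n => h.measure_ge_le_pow hq₀ (l := ε / 2) (by positivity) _ n)
    rw [ENNReal.tsum_geometric]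
    exact ENNReal.inv_ne_top.mpr (tsub_pos_of_lt (ENNReal.ofReal_lt_one.mpr hρ)).ne'
  filter_upwards [ae_eventually_notMem hsum] with ω hω
  filter_upwards [hω] with n hn
  exact lt_of_not_ge hn

lemma limsup_div_le (h : IsWalkUpProbLE P X q) {ω : Ω} {t : ℝ}
    (hω : ∀ᶠ n in atTop, (X n ω : ℝ) < t * n) :
    limsup (fun n : ℕ => (X n ω : ℝ) / n) atTop ≤ t := by
  have hbdd (n : ℕ) : -1 ≤ (X n ω : ℝ) / n := by
    have habs : |(X n ω : ℝ)| ≤ n := by exact_mod_cast h.abs_le ω n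
    have hdiv : |(X n ω : ℝ) / n| ≤ 1 := by
      rw [abs_div, Nat.abs_cast]
      exact div_le_one_of_le₀ habs n.cast_nonneg
    exact (_root_.abs_le.mp hdiv).1
  refine limsup_le_of_le (isCoboundedUnder_le_of_le atTop hbdd) ?_
  filter_upwards [hω, eventually_gt_atTop 0] with n hn hn₀
  exact (div_le_iff₀ (by exact_mod_cast hn₀)).mpr hn.le

lemma ae_limsup_div_le (h : IsWalkUpProbLE P X q) [IsProbabilityMeasure P] (hq₀ : 0 ≤ q)
    (hq₁ : q ≤ 1) :
    ∀ᵐ ω ∂P, limsup (fun n : ℕ => (X n ω : ℝ) / n) atTop ≤ 2 * q - 1 :=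
  ae_le_of_forall_ae_le_add fun _ hε hε₁ =>
    (h.ae_eventually_lt hq₀ hq₁ hε hε₁).mono fun _ hω => h.limsup_div_le hω

end IsWalkUpProbLE

end Walk

theorem excited_rw_limsup_le_general
    {Ω : Type*} [MeasurableSpace Ω] (P : Measure Ω) [IsProbabilityMeasure P]
    (q : ℝ) (hq : q ∈ Set.Ioo (1 / 2 : ℝ) 1)
    (M : ℕ) (p : Fin M → ℝ)
    (hpq : ∀ i, p i ≤ q)
    (Y : ℕ → Ω → ℤ) (hY : IsEARW P M p (1 / 2) Y) :
    ∀ᵐ ω ∂P, Filter.limsup (fun n : ℕ => (Y n ω : ℝ) / n) atTop ≤ 2 * q - 1 :=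
  (hY.isWalkUpProbLE hq.1.le hpq).ae_limsup_div_le (by linarith [hq.1]) hq.2.le

/-- **Upper bound on the speed via domination.**
If `q ∈ (1/2,1)` and every cookie strength satisfies `p i ≤ q`, then the standard
excited random walk with cookie vector `p` satisfies, almost surely,
`limsup Y n / n ≤ 2 q - 1`. -/
theorem excited_rw_limsup_le
    {Ω : Type*} [MeasurableSpace Ω] (P : Measure Ω) [IsProbabilityMeasure P]
    (q : ℝ) (hq : q ∈ Set.Ioo (1 / 2 : ℝ) 1)
    (M : ℕ) (hM : 1 ≤ M) (p : Fin M → ℝ) (hp : ∀ i, p i ∈ Set.Ioo (0 : ℝ) 1)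
    (hpq : ∀ i, p i ≤ q)
    (Y : ℕ → Ω → ℤ) (hY : IsEARW P M p (1 / 2) Y) :
    ∀ᵐ ω ∂P, Filter.limsup (fun n : ℕ => (Y n ω : ℝ) / n) atTop ≤ 2 * q - 1 :=
  excited_rw_limsup_le_general P q hq M p hpq Y hY
end

section
/- Let 5/6 < q < p < 1 and set f(q) = (6q−5)(q²−2q−1)/(24q⁴−42q³−3q²+28q−9). Suppose the standard excited random walk (Y^q_n)_{n≥0} with cookie vector (q,q,q) satisfies liminf_{n→∞} Y^q_n / n ≥ f(q) almost surely. For i ∈ ℕ let p^{(i)} = 1/2 + 3(2p−1)/(2(3+i)) and p_i = (p^{(i)},…,p^{(i)}) ∈ (0,1)^{3+i}, and let (Y^{p_i}_n)_{n≥0} be the standard excited random walk with cookie vector p_i. Then there exists N ∈ ℕ such that for all i > N: δ(3,(q,q,q)) < δ(3+i, p_i), and almost surely limsup_{n→∞} Y^{p_i}_n / n < f(q) ≤ liminf_{n→∞} Y^q_n / n. -/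
open MeasureTheory ProbabilityTheory Filter Topology
open scoped ENNReal NNReal

/-!
The `δ` comparison is arithmetic: `δ(3 + i, p_i) = 3 (2p - 1) > 3 (2q - 1)` for every `i`. For the
speed, as `i → ∞` the cookie strength `p^{(i)}` tends to `1/2`. If every transition probability of
an excited walk lies in `[l, r]`, the probability of a prescribed path of `n` steps is at most
`r ^ #ups * (1 - l) ^ #downs`, and summing `θ ^ (n + X n)` over all paths gives the exponential
Chebyshev bound `P (X n ≥ k) θ ^ (n + k) ≤ (θ² r + 1 - l) ^ n` for `θ ≥ 1`. With `θ = 1 + a`,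
Bernoulli's inequality `(1 + a) ^ (1 + a) ≥ 1 + a + a²` makes `P (X n ≥ a n)` geometrically small
once `r` is close to `1/2`, and Borel–Cantelli gives `limsup X n / n ≤ a` almost surely. Any
`a < f q` will do, and `f q > 0` for `5/6 < q < 1`.
-/

open Finset

theorem cookieSeq_mem_Icc {M : ℕ} {p : Fin M → ℝ} {p₀ l r : ℝ} (hp : ∀ i, p i ∈ Set.Icc l r)
    (hp₀ : p₀ ∈ Set.Icc l r) (j : ℕ) : cookieSeq M p p₀ j ∈ Set.Icc l r := by
  unfold cookieSeq
  split_ifs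
  exacts [hp _, hp₀]

namespace IsEARW

def upCount (s : ℕ → Bool) (n : ℕ) : ℕ := #{j ∈ range n | s j}

theorem upCount_succ (s : ℕ → Bool) (n : ℕ) :
    upCount s (n + 1) = upCount s n + if s n then 1 else 0 := by
  simp only [upCount, card_filter, sum_range_succ]

theorem prod_range_ite_one_eq_pow_upCount {R : Type*} [CommMonoid R] (s : ℕ → Bool) (x : R)
    (n : ℕ) :
    ∏ j ∈ range n, (if s j then x else 1) = x ^ upCount s n := by
  rw [← prod_filter, prod_const, upCount]

/-- The walk follows the step sequence `s` (`true` = up) during its first `n` steps. -/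
def pathSet {Ω : Type*} (X : ℕ → Ω → ℤ) (s : ℕ → Bool) (n : ℕ) : Set Ω :=
  {ω | ∀ m ≤ n, X m ω = 2 * (upCount s m : ℤ) - m}

def extendFalse {n : ℕ} (t : Fin n → Bool) (j : ℕ) : Bool :=
  if h : j < n then t ⟨j, h⟩ else false

theorem sum_prod_range_extendFalse {R : Type*} [CommSemiring R] (x y : R) (n : ℕ) :
    ∑ t : Fin n → Bool, ∏ j ∈ range n, (if extendFalse t j then x else y) = (x + y) ^ n := by
  calc ∑ t : Fin n → Bool, ∏ j ∈ range n, (if extendFalse t j then x else y)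
      = ∑ t : Fin n → Bool, ∏ j : Fin n, (if t j then x else y) := by
        refine sum_congr rfl fun t _ => ?_
        rw [← Fin.prod_univ_eq_prod_range (fun j => if extendFalse t j then x else y)]
        simp [extendFalse]
    _ = (x + y) ^ n := by
        rw [← Fintype.prod_sum fun (_ : Fin n) (b : Bool) => if b then x else y]
        simp

theorem pathSet_succ {Ω : Type*} {X : ℕ → Ω → ℤ} (s : ℕ → Bool) (n : ℕ) :
    pathSet X s (n + 1) = {ω | X (n + 1) ω = 2 * (upCount s n : ℤ) - n + if s n then 1 else -1}
      ∩ pathSet X s n := by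
  have hpos : 2 * (upCount s (n + 1) : ℤ) - (n + 1 : ℕ)
      = 2 * (upCount s n : ℤ) - n + if s n then 1 else -1 := by
    rw [upCount_succ]; split_ifs <;> push_cast <;> ring
  ext ω
  simp only [pathSet, Set.mem_inter_iff, Set.mem_ofPred_eq, ← hpos]
  exact ⟨fun hω => ⟨hω _ le_rfl, fun m hm => hω m (hm.trans n.le_succ)⟩,
    fun ⟨hlast, hω⟩ m hm => (Nat.le_succ_iff.1 hm).elim (hω m) (· ▸ hlast)⟩

theorem pathSet_eq_forall_fin {Ω : Type*} {X : ℕ → Ω → ℤ} (s : ℕ → Bool) (n : ℕ) :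
    pathSet X s n = {ω | ∀ m : Fin (n + 1), X m ω = 2 * (upCount s m : ℤ) - (m : ℕ)} := by
  ext ω
  simp only [pathSet, Set.mem_ofPred_eq, Fin.forall_iff, Nat.lt_succ_iff]

variable {Ω : Type*} [MeasurableSpace Ω] {P : Measure Ω} {M : ℕ} {p : Fin M → ℝ} {p₀ : ℝ}
  {X : ℕ → Ω → ℤ}

theorem step_eq (h : IsEARW P M p p₀ X) (ω : Ω) (n : ℕ) :
    X (n + 1) ω = X n ω + 1 ∨ X (n + 1) ω = X n ω - 1 := by
  rcases abs_eq (zero_le_one' ℤ) |>.1 (h.steps ω n) with hs | hs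
  exacts [.inl (by omega), .inr (by omega)]

theorem abs_apply_le (h : IsEARW P M p p₀ X) (ω : Ω) (n : ℕ) : |X n ω| ≤ n := by
  induction n with
  | zero => simp [h.init ω]
  | succ n ih =>
    push_cast
    linarith [abs_sub_abs_le_abs_sub (X (n + 1) ω) (X n ω), h.steps ω n]

theorem abs_div_le_one (h : IsEARW P M p p₀ X) (ω : Ω) (n : ℕ) : |(X n ω : ℝ) / n| ≤ 1 := by
  rw [abs_div, Nat.abs_cast]
  exact div_le_one_of_le₀ (by exact_mod_cast h.abs_apply_le ω n) n.cast_nonneg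

theorem measurableSet_forall_eq (h : IsEARW P M p p₀ X) {n : ℕ} (w : Fin (n + 1) → ℤ) :
    MeasurableSet {ω | ∀ m : Fin (n + 1), X m ω = w m} := by
  simp only [Set.ofPred_forall]
  exact .iInter fun m => h.measurable m (measurableSet_singleton _)

theorem measure_up_inter_le (h : IsEARW P M p p₀ X) {r : ℝ} (hr : ∀ j, cookieSeq M p p₀ j ≤ r)
    {n : ℕ} (w : Fin (n + 1) → ℤ) :
    P ({ω | X (n + 1) ω = w (Fin.last n) + 1} ∩ {ω | ∀ m : Fin (n + 1), X m ω = w m})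
      ≤ ENNReal.ofReal r * P {ω | ∀ m : Fin (n + 1), X m ω = w m} := by
  rw [h.cond]
  gcongr
  exact hr _

theorem measure_down_inter_le [IsFiniteMeasure P] (h : IsEARW P M p p₀ X) {l : ℝ} (hl₀ : 0 ≤ l)
    (hl : ∀ j, l ≤ cookieSeq M p p₀ j) {n : ℕ} (w : Fin (n + 1) → ℤ) :
    P ({ω | X (n + 1) ω = w (Fin.last n) - 1} ∩ {ω | ∀ m : Fin (n + 1), X m ω = w m})
      ≤ ENNReal.ofReal (1 - l) * P {ω | ∀ m : Fin (n + 1), X m ω = w m} := by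
  set E := {ω | ∀ m : Fin (n + 1), X m ω = w m}
  have hdown : {ω | X (n + 1) ω = w (Fin.last n) - 1} ∩ E
      = E \ ({ω | X (n + 1) ω = w (Fin.last n) + 1} ∩ E) := by
    ext ω
    simp only [Set.mem_inter_iff, Set.mem_sdiff, Set.mem_ofPred_eq]
    constructor
    · rintro ⟨hX, hω⟩
      exact ⟨hω, fun ⟨hX', _⟩ => by omega⟩
    · rintro ⟨hω, hup⟩
      have hlast : X n ω = w (Fin.last n) := hω (Fin.last n)
      rcases h.step_eq ω n with hs | hs
      · exact absurd ⟨by omega, hω⟩ hup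
      · exact ⟨by omega, hω⟩
  have hup : MeasurableSet ({ω | X (n + 1) ω = w (Fin.last n) + 1} ∩ E) :=
    (h.measurable _ (measurableSet_singleton _)).inter (h.measurableSet_forall_eq w)
  have hE : P E ≠ ⊤ := measure_ne_top P E
  rw [hdown, measure_sdiff Set.inter_subset_right hup.nullMeasurableSet (measure_ne_top P _),
    h.cond, ENNReal.ofReal_sub _ hl₀, ENNReal.ofReal_one, ENNReal.sub_mul fun _ _ => hE, one_mul]
  gcongr
  exact hl _

theorem pathSet_zero (h : IsEARW P M p p₀ X) (s : ℕ → Bool) : pathSet X s 0 = Set.univ := by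
  ext ω
  simp [pathSet, upCount, h.init ω]

theorem mem_pathSet_of_steps (h : IsEARW P M p p₀ X) {ω : Ω} {s : ℕ → Bool} {n : ℕ}
    (hs : ∀ j < n, s j = decide (X (j + 1) ω = X j ω + 1)) : ω ∈ pathSet X s n := by
  induction n with
  | zero => simp [h.pathSet_zero]
  | succ n ih =>
    have hω := ih fun j hj => hs j (hj.trans n.lt_succ_self)
    refine pathSet_succ (X := X) s n ▸ ⟨?_, hω⟩
    have hlast : X n ω = 2 * (upCount s n : ℤ) - n := hω n le_rfl
    rw [Set.mem_ofPred_eq, hs n n.lt_succ_self, ← hlast]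
    rcases h.step_eq ω n with hstep | hstep
    · simp [hstep]
    · simp [hstep, sub_eq_add_neg]

theorem measure_pathSet_succ_le [IsFiniteMeasure P] (h : IsEARW P M p p₀ X) {l r : ℝ} (hl₀ : 0 ≤ l)
    (hc : ∀ j, cookieSeq M p p₀ j ∈ Set.Icc l r) (s : ℕ → Bool) (n : ℕ) :
    P (pathSet X s (n + 1))
      ≤ (if s n then ENNReal.ofReal r else ENNReal.ofReal (1 - l)) * P (pathSet X s n) := by
  rw [pathSet_succ, pathSet_eq_forall_fin]
  have hlast : 2 * (upCount s n : ℤ) - n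
      = (fun m : Fin (n + 1) => 2 * (upCount s m : ℤ) - (m : ℕ)) (Fin.last n) := rfl
  cases s n
  · simpa only [hlast, Bool.false_eq_true, if_false, ← sub_eq_add_neg]
      using h.measure_down_inter_le hl₀ (fun j => (hc j).1) _
  · simpa only [hlast, if_true] using h.measure_up_inter_le (fun j => (hc j).2) _

theorem measure_pathSet_le [IsProbabilityMeasure P] (h : IsEARW P M p p₀ X) {l r : ℝ}
    (hl₀ : 0 ≤ l) (hc : ∀ j, cookieSeq M p p₀ j ∈ Set.Icc l r) (s : ℕ → Bool) (n : ℕ) :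
    P (pathSet X s n)
      ≤ ∏ j ∈ range n, if s j then ENNReal.ofReal r else ENNReal.ofReal (1 - l) := by
  induction n with
  | zero => simpa using prob_le_one
  | succ n ih =>
    rw [prod_range_succ, mul_comm]
    exact (h.measure_pathSet_succ_le hl₀ hc s n).trans (by gcongr)

theorem setOf_le_subset_biUnion_pathSet (h : IsEARW P M p p₀ X) (n k : ℕ) :
    {ω | (k : ℤ) ≤ X n ω} ⊆ ⋃ t ∈ ({t | (k : ℤ) ≤ 2 * (upCount (extendFalse t) n : ℤ) - n} :
      Finset (Fin n → Bool)), pathSet X (extendFalse t) n := by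
  intro ω hω
  set t : Fin n → Bool := fun j => decide (X (j + 1) ω = X j ω + 1)
  have hpath : ω ∈ pathSet X (extendFalse t) n := h.mem_pathSet_of_steps fun j hj => dif_pos hj
  refine Set.mem_biUnion (x := t) ?_ hpath
  simpa [← hpath n le_rfl] using hω

theorem measure_pathSet_mul_pow_le [IsProbabilityMeasure P] (h : IsEARW P M p p₀ X) {l r : ℝ}
    (hl₀ : 0 ≤ l) (hc : ∀ j, cookieSeq M p p₀ j ∈ Set.Icc l r) (θ : ℝ≥0∞) (s : ℕ → Bool)
    (n : ℕ) :
    P (pathSet X s n) * θ ^ (2 * upCount s n)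
      ≤ ∏ j ∈ range n, if s j then θ ^ 2 * ENNReal.ofReal r else ENNReal.ofReal (1 - l) := by
  rw [pow_mul, ← prod_range_ite_one_eq_pow_upCount, mul_comm]
  calc _ ≤ (∏ j ∈ range n, if s j then θ ^ 2 else 1) *
        ∏ j ∈ range n, (if s j then ENNReal.ofReal r else ENNReal.ofReal (1 - l)) := by
        gcongr
        exact h.measure_pathSet_le hl₀ hc s n
    _ = _ := by
        rw [← prod_mul_distrib]
        refine prod_congr rfl fun j _ => ?_
        split_ifs <;> simp

theorem measure_le_mul_pow_le [IsProbabilityMeasure P] (h : IsEARW P M p p₀ X) {l r : ℝ}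
    (hl₀ : 0 ≤ l) (hc : ∀ j, cookieSeq M p p₀ j ∈ Set.Icc l r) {θ : ℝ≥0∞} (hθ : 1 ≤ θ)
    (n k : ℕ) :
    P {ω | (k : ℤ) ≤ X n ω} * θ ^ (n + k)
      ≤ (θ ^ 2 * ENNReal.ofReal r + ENNReal.ofReal (1 - l)) ^ n := by
  set F : Finset (Fin n → Bool) := {t | (k : ℤ) ≤ 2 * (upCount (extendFalse t) n : ℤ) - n}
  calc P {ω | (k : ℤ) ≤ X n ω} * θ ^ (n + k)
      ≤ (∑ t ∈ F, P (pathSet X (extendFalse t) n)) * θ ^ (n + k) := by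
        gcongr
        exact (measure_mono (h.setOf_le_subset_biUnion_pathSet n k)).trans
          (measure_biUnion_finset_le _ _)
    _ ≤ ∑ t ∈ F, P (pathSet X (extendFalse t) n) * θ ^ (2 * upCount (extendFalse t) n) := by
        rw [sum_mul]
        refine sum_le_sum fun t ht => ?_
        have := (mem_filter.1 ht).2
        gcongr
        omega
    _ ≤ ∑ t, P (pathSet X (extendFalse t) n) * θ ^ (2 * upCount (extendFalse t) n) :=
        sum_le_sum_of_subset (subset_univ F)
    _ ≤ ∑ t : Fin n → Bool, ∏ j ∈ range n,
          if extendFalse t j then θ ^ 2 * ENNReal.ofReal r else ENNReal.ofReal (1 - l) :=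
        sum_le_sum fun t _ => h.measure_pathSet_mul_pow_le hl₀ hc θ _ n
    _ = _ := sum_prod_range_extendFalse _ _ n

theorem measure_ceil_mul_le_le_pow [IsProbabilityMeasure P] (h : IsEARW P M p p₀ X) {l r θ a : ℝ}
    (hl₀ : 0 ≤ l) (hl₁ : l ≤ 1) (hc : ∀ j, cookieSeq M p p₀ j ∈ Set.Icc l r) (hθ : 1 ≤ θ)
    (n : ℕ) :
    P {ω | (⌈a * n⌉₊ : ℤ) ≤ X n ω}
      ≤ ENNReal.ofReal ((θ ^ 2 * r + (1 - l)) / θ ^ (1 + a)) ^ n := by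
  have hr : 0 ≤ r := hl₀.trans ((hc 0).1.trans (hc 0).2)
  have hθa : 0 < θ ^ (1 + a) := Real.rpow_pos_of_pos (by linarith) _
  have hden : (θ ^ (1 + a)) ^ n ≤ θ ^ (n + ⌈a * n⌉₊) := by
    rw [← Real.rpow_natCast, ← Real.rpow_mul (by linarith), ← Real.rpow_natCast]
    apply Real.rpow_le_rpow_of_exponent_le hθ
    push_cast
    nlinarith [Nat.le_ceil (a * n)]
  have hbase : ENNReal.ofReal θ ^ 2 * ENNReal.ofReal r + ENNReal.ofReal (1 - l)
      = ENNReal.ofReal (θ ^ 2 * r + (1 - l)) := by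
    rw [ENNReal.ofReal_add (by positivity) (by linarith), ENNReal.ofReal_mul (by positivity),
      ENNReal.ofReal_pow (by linarith)]
  have key := h.measure_le_mul_pow_le hl₀ hc (ENNReal.one_le_ofReal.2 hθ) n ⌈a * n⌉₊
  rw [hbase, ← ENNReal.ofReal_pow (by linarith : 0 ≤ θ),
    ← ENNReal.ofReal_pow (by positivity : 0 ≤ θ ^ 2 * r + (1 - l))] at key
  rw [← ENNReal.ofReal_pow (by positivity), div_pow,
    ENNReal.ofReal_div_of_pos (by positivity), ENNReal.le_div_iff_mul_le (by simp [hθa])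
      (by simp)]
  exact (mul_le_mul_right (ENNReal.ofReal_le_ofReal hden) _).trans key

theorem ae_limsup_div_le [IsProbabilityMeasure P] (h : IsEARW P M p p₀ X) {l r θ a : ℝ}
    (hl₀ : 0 ≤ l) (hl₁ : l ≤ 1) (hc : ∀ j, cookieSeq M p p₀ j ∈ Set.Icc l r) (hθ : 1 ≤ θ)
    (ha : 0 ≤ a) (hρ : θ ^ 2 * r + (1 - l) < θ ^ (1 + a)) :
    ∀ᵐ ω ∂P, limsup (fun n : ℕ => (X n ω : ℝ) / n) atTop ≤ a := by
  have hρ₁ : ENNReal.ofReal ((θ ^ 2 * r + (1 - l)) / θ ^ (1 + a)) < 1 :=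
    ENNReal.ofReal_lt_one.2 <| (div_lt_one (Real.rpow_pos_of_pos (by linarith) _)).2 hρ
  have hsum : ∑' n : ℕ, P {ω | (⌈a * n⌉₊ : ℤ) ≤ X n ω} ≠ ⊤ := by
    refine ne_top_of_le_ne_top ?_
      (ENNReal.tsum_le_tsum (h.measure_ceil_mul_le_le_pow hl₀ hl₁ hc hθ))
    rw [ENNReal.tsum_geometric]
    exact ENNReal.inv_ne_top.2 (tsub_pos_of_lt hρ₁).ne'
  filter_upwards [ae_eventually_notMem hsum] with ω hω
  refine limsup_le_of_le (isCoboundedUnder_le_of_le atTop (x := -1) fun n => ?_) ?_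
  · exact (abs_le.1 (h.abs_div_le_one ω n)).1
  filter_upwards [hω] with n hn
  have hXn : X n ω < (⌈a * n⌉₊ : ℤ) := lt_of_not_ge hn
  have hXn' : (X n ω : ℝ) ≤ ⌈a * n⌉₊ - 1 := by exact_mod_cast Int.le_sub_one_of_lt hXn
  refine div_le_of_le_mul₀ n.cast_nonneg ha ?_
  linarith [Nat.ceil_lt_add_one (mul_nonneg ha n.cast_nonneg)]

end IsEARW

theorem speed_bound_pos {q : ℝ} (hq : 5 / 6 < q) (hq₁ : q < 1) :
    0 < (6 * q - 5) * (q ^ 2 - 2 * q - 1) / (24 * q ^ 4 - 42 * q ^ 3 - 3 * q ^ 2 + 28 * q - 9) := by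
  have h₁ : 0 < 1 - q := by linarith
  have h₂ : 0 < q - 5 / 6 := by linarith
  refine div_pos_of_neg_of_neg (mul_neg_of_pos_of_neg (by linarith) (by nlinarith)) ?_
  nlinarith [mul_pos h₁ h₂, sq_nonneg (q - 5 / 6), mul_pos (mul_pos h₁ h₁) h₁]

theorem eventually_ae_limsup_div_lt {ι : Type*} {L : Filter ι} {Ω : ι → Type*}
    [∀ i, MeasurableSpace (Ω i)] {P : ∀ i, Measure (Ω i)} [∀ i, IsProbabilityMeasure (P i)]
    {M : ι → ℕ} {c : ι → ℝ} {X : ∀ i, ℕ → Ω i → ℤ}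
    (hX : ∀ i, IsEARW (P i) (M i) (fun _ => c i) (1 / 2) (X i)) (hc : ∀ i, 1 / 2 ≤ c i)
    (hlim : Tendsto c L (𝓝 (1 / 2))) {b : ℝ} (hb : 0 < b) :
    ∀ᶠ i in L, ∀ᵐ ω ∂P i, limsup (fun n : ℕ => (X i n ω : ℝ) / n) atTop < b := by
  set a := b / 2
  have ha : 0 < a := half_pos hb
  have hgap : (1 + a) ^ 2 * (1 / 2) + (1 - 1 / 2) < (1 + a) ^ (1 + a) :=
    (by nlinarith : _ < 1 + (1 + a) * a).trans_le
      (one_add_mul_self_le_rpow_one_add (by linarith) (by linarith))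
  filter_upwards [((hlim.const_mul _).add_const _).eventually_lt_const hgap] with i hi
  have hci := cookieSeq_mem_Icc (M := M i) (fun _ => ⟨hc i, le_rfl⟩) ⟨le_rfl, hc i⟩
  filter_upwards [(hX i).ae_limsup_div_le (by norm_num) (by norm_num) hci (by linarith) ha.le hi]
    with ω hω
  exact hω.trans_lt (half_lt_self hb)

theorem delta_speed_opposite_relation_general
    {Ωq : Type*} [MeasurableSpace Ωq] (Pq : Measure Ωq)
    (q p : ℝ) (hq : 5 / 6 < q) (hqp : q < p) (hp : p < 1)
    (f : ℝ → ℝ)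
    (hf : f = fun x => ((6 * x - 5) * (x ^ 2 - 2 * x - 1))
      / (24 * x ^ 4 - 42 * x ^ 3 - 3 * x ^ 2 + 28 * x - 9))
    (Yq : ℕ → Ωq → ℤ)
    (hlb : ∀ᵐ ω ∂Pq, f q ≤ Filter.liminf (fun n : ℕ => (Yq n ω : ℝ) / n) atTop)
    (pI : ℕ → ℝ) (hpI : ∀ i : ℕ, pI i = 1 / 2 + 3 * (2 * p - 1) / (2 * (3 + i)))
    (Ω : ℕ → Type*) [∀ i, MeasurableSpace (Ω i)]
    (P : ∀ i, Measure (Ω i)) [∀ i, IsProbabilityMeasure (P i)]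
    (Y : ∀ i : ℕ, ℕ → Ω i → ℤ)
    (hY : ∀ i, IsEARW (P i) (3 + i) (fun _ => pI i) (1 / 2) (Y i)) :
    ∃ N : ℕ, ∀ i : ℕ, N < i →
      (∑ _j : Fin 3, (2 * q - 1)) < (∑ _j : Fin (3 + i), (2 * pI i - 1))
      ∧ (∀ᵐ ω ∂P i, Filter.limsup (fun n : ℕ => (Y i n ω : ℝ) / n) atTop < f q)
      ∧ (∀ᵐ ω ∂Pq, f q ≤ Filter.liminf (fun n : ℕ => (Yq n ω : ℝ) / n) atTop) := by
  have hδ : ∀ i : ℕ, ∑ _j : Fin (3 + i), (2 * pI i - 1) = 3 * (2 * p - 1) := fun i => by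
    rw [sum_const, card_univ, Fintype.card_fin, nsmul_eq_mul, hpI]
    push_cast
    field_simp
    ring
  have hpI_ge : ∀ i, 1 / 2 ≤ pI i := fun i => by
    have : 0 ≤ 3 * (2 * p - 1) / (2 * (3 + i)) := div_nonneg (by linarith) (by positivity)
    rw [hpI]
    linarith
  have hpI_lim : Tendsto pI atTop (𝓝 (1 / 2)) := by
    rw [funext hpI]
    simpa using tendsto_const_nhds.add <| tendsto_const_nhds.div_atTop <|
      (tendsto_atTop_add_const_left _ 3 (tendsto_natCast_atTop_atTop (R := ℝ))).const_mul_atTop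
        two_pos
  have hfq : 0 < f q := hf ▸ speed_bound_pos hq (hqp.trans hp)
  obtain ⟨N, hN⟩ := eventually_atTop.1 (eventually_ae_limsup_div_lt hY hpI_ge hpI_lim hfq)
  refine ⟨N, fun i hi => ⟨?_, hN i hi.le, hlb⟩⟩
  simp only [hδ, sum_const, card_univ, Fintype.card_fin, nsmul_eq_mul]
  push_cast
  linarith

/-- **Opposite relations between `δ` and the speed.**
Let `5/6 < q < p < 1` and let `f q` be the lower bound on the speed of the 3-cookie
walk with cookie vector `(q,q,q)`; suppose that walk satisfies
`liminf Y^q n / n ≥ f q` a.s.  With `pI i = 1/2 + 3 (2p-1)/(2 (3+i))` and `Y^(i)` the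
standard excited random walk with `3+i` cookies of strength `pI i`, there is an `N`
such that for all `i > N`: `δ(3,(q,q,q)) < δ(3+i, p_i)`, while almost surely
`limsup Y^(i) n / n < f q ≤ liminf Y^q n / n`. -/
theorem delta_speed_opposite_relation
    {Ωq : Type*} [MeasurableSpace Ωq] (Pq : Measure Ωq) [IsProbabilityMeasure Pq]
    (q p : ℝ) (hq : 5 / 6 < q) (hqp : q < p) (hp : p < 1)
    (f : ℝ → ℝ)
    (hf : f = fun x => ((6 * x - 5) * (x ^ 2 - 2 * x - 1))
      / (24 * x ^ 4 - 42 * x ^ 3 - 3 * x ^ 2 + 28 * x - 9))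
    (Yq : ℕ → Ωq → ℤ) (hYq : IsEARW Pq 3 (fun _ => q) (1 / 2) Yq)
    (hlb : ∀ᵐ ω ∂Pq, f q ≤ Filter.liminf (fun n : ℕ => (Yq n ω : ℝ) / n) atTop)
    (pI : ℕ → ℝ) (hpI : ∀ i : ℕ, pI i = 1 / 2 + 3 * (2 * p - 1) / (2 * (3 + i)))
    (Ω : ℕ → Type*) [∀ i, MeasurableSpace (Ω i)]
    (P : ∀ i, Measure (Ω i)) [∀ i, IsProbabilityMeasure (P i)]
    (Y : ∀ i : ℕ, ℕ → Ω i → ℤ)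
    (hY : ∀ i, IsEARW (P i) (3 + i) (fun _ => pI i) (1 / 2) (Y i)) :
    ∃ N : ℕ, ∀ i : ℕ, N < i →
      (∑ _j : Fin 3, (2 * q - 1)) < (∑ _j : Fin (3 + i), (2 * pI i - 1))
      ∧ (∀ᵐ ω ∂P i, Filter.limsup (fun n : ℕ => (Y i n ω : ℝ) / n) atTop < f q)
      ∧ (∀ᵐ ω ∂Pq, f q ≤ Filter.liminf (fun n : ℕ => (Yq n ω : ℝ) / n) atTop) :=
  delta_speed_opposite_relation_general Pq q p hq hqp hp f hf Yq hlb pI hpI Ω P Y hY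
end
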